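/- For every infinite word w over {P,S}: w ↠∞ P^ω if and only if ‖w‖_P = ∞. -/
import Mathlib


/-!
Infinitary rewriting for the weakly orthogonal string rewrite system
over the alphabet `{P, S}` with rules `PS → ε` and `SP → ε`.
-/

namespace PS

/-- The two letters of the alphabet. -/
inductive Letter : Type
  | P : Letter
  | S : Letter
  deriving DecidableEq

open Letter

/-- Finite words over `{P, S}`. -/
abbrev Word : Type := List Letter

/-- Infinite words over `{P, S}`. -/
abbrev IWord : Type := ℕ → Letter

/-- One rewrite step on finite words: delete an adjacent factor `PS` or `SP`. -/
def FStep (w w' : Word) : Prop :=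
  ∃ u v : Word, (w = u ++ [P, S] ++ v ∨ w = u ++ [S, P] ++ v) ∧ w' = u ++ v

/-- The value of a letter: `S` counts `+1` and `P` counts `-1`. -/
def lval : Letter → ℤ
  | S => 1
  | P => -1

/-- `sum(w)` for a finite word `w`: number of `S`'s minus number of `P`'s. -/
def fsum (w : Word) : ℤ := (w.map lval).sum

/-- `sum(w, n)`: the number of `S`'s minus the number of `P`'s among the
first `n` letters of the infinite word `w`. -/
def isum (w : IWord) (n : ℕ) : ℤ := ∑ i ∈ Finset.range n, lval (w i)

/-- A rewrite step at depth `d` on infinite words: the letters at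
positions `d`, `d+1` form `PS` or `SP` and are deleted. -/
def IStepAt (d : ℕ) (w w' : IWord) : Prop :=
  ((w d = P ∧ w (d + 1) = S) ∨ (w d = S ∧ w (d + 1) = P)) ∧
    ∀ i, w' i = if i < d then w i else w (i + 2)

/-- `IRed w u` (written `w ↠∞ u`): there is a strongly convergent infinitary
reduction from `w` with limit `u`.  By compression, reductions of length at
most `ω` suffice; such a reduction is a sequence of rewrite steps (with idle
steps allowed, to accommodate finite reductions) whose depths tend to
infinity and whose terms converge to `u`. -/
def IRed (w u : IWord) : Prop :=
  ∃ (t : ℕ → IWord) (d : ℕ → Option ℕ),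
    t 0 = w ∧
    (∀ n, (d n).elim (t (n + 1) = t n) (fun k => IStepAt k (t n) (t (n + 1)))) ∧
    (∀ m : ℕ, ∃ N, ∀ n ≥ N, ∀ k, d n = some k → m ≤ k) ∧
    (∀ m : ℕ, ∃ N, ∀ n ≥ N, ∀ i ≤ m, t n i = u i)

/-- The constant infinite word `S^ω`. -/
def Somega : IWord := fun _ => S

/-- The constant infinite word `P^ω`. -/
def Pomega : IWord := fun _ => P

/-- The `S`-norm `‖w‖_S = sup_n sum(w, n)` (as an extended real). -/
noncomputable def Snorm (w : IWord) : EReal := ⨆ n : ℕ, ((isum w n : ℝ) : EReal)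

/-- The `P`-norm `‖w‖_P = sup_n (− sum(w, n))` (as an extended real). -/
noncomputable def Pnorm (w : IWord) : EReal := ⨆ n : ℕ, ((-(isum w n) : ℝ) : EReal)

/-- An infinite word is a normal form if it admits no rewrite step. -/
def NormalForm (w : IWord) : Prop := ∀ (d : ℕ) (w' : IWord), ¬ IStepAt d w w'

/-- Infinitary conversion: the equivalence generated by `↠∞`. -/
inductive Conv : IWord → IWord → Prop
  | rel {w u : IWord} : IRed w u → Conv w u
  | refl (w : IWord) : Conv w w
  | symm {w u : IWord} : Conv w u → Conv u w
  | trans {w u v : IWord} : Conv w u → Conv u v → Conv w v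

end PS

namespace PS

open Letter

/-! ### Auxiliary lemmas -/

lemma lval_neg_one_le (l : Letter) : -1 ≤ lval l := by cases l <;> simp [lval]

lemma lval_le_one (l : Letter) : lval l ≤ 1 := by cases l <;> simp [lval]

lemma isum_succ (v : IWord) (n : ℕ) : isum v (n + 1) = isum v n + lval (v n) :=
  Finset.sum_range_succ _ n

lemma isum_P {v : IWord} {n : ℕ} (h : ∀ i < n, v i = P) : isum v n = -(n : ℤ) := by
  induction n with
  | zero => simp [isum]
  | succ n ih =>
    rw [isum_succ, ih (fun i hi => h i (by omega)), h n (by omega)]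
    simp only [lval]; push_cast; ring

lemma isum_step {k : ℕ} {v v' : IWord} (h : IStepAt k v v') (m : ℕ) :
    isum v' m = if m ≤ k then isum v m else isum v (m + 2) := by
  have hpair : lval (v k) + lval (v (k + 1)) = 0 := by
    rcases h.1 with ⟨h1, h2⟩ | ⟨h1, h2⟩ <;> rw [h1, h2] <;> simp [lval]
  induction m with
  | zero => simp [isum]
  | succ m ih =>
    rw [isum_succ, h.2 m]
    rcases lt_trichotomy m k with hm | hm | hm
    · rw [if_pos hm, if_pos (by omega : m + 1 ≤ k)]
      rw [if_pos (le_of_lt hm)] at ih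
      rw [ih, ← isum_succ]
    · subst hm
      rw [if_neg (lt_irrefl m), if_neg (by omega : ¬ m + 1 ≤ m)]
      rw [if_pos le_rfl] at ih
      have h3 : isum v (m + 1 + 2) = isum v m + lval (v m) + lval (v (m + 1)) + lval (v (m + 2)) := by
        rw [show m + 1 + 2 = m + 2 + 1 by ring, isum_succ, show m + 2 = m + 1 + 1 by ring,
          isum_succ, isum_succ]
      rw [ih, h3]
      linarith
    · rw [if_neg (by omega : ¬ m < k), if_neg (by omega : ¬ m + 1 ≤ k)]
      rw [if_neg (by omega : ¬ m ≤ k)] at ih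
      rw [ih, show m + 1 + 2 = m + 2 + 1 by ring]
      exact (isum_succ v (m + 2)).symm

lemma isum_pair {k : ℕ} {v v' : IWord} (h : IStepAt k v v') : isum v (k + 2) = isum v k := by
  have hpair : lval (v k) + lval (v (k + 1)) = 0 := by
    rcases h.1 with ⟨h1, h2⟩ | ⟨h1, h2⟩ <;> rw [h1, h2] <;> simp [lval]
  rw [show k + 2 = k + 1 + 1 by ring, isum_succ, isum_succ]
  linarith

/-- Unboundedness below of the running sums (equivalent to `Pnorm = ⊤`). -/
def Unb (v : IWord) : Prop := ∀ m : ℕ, ∃ n, isum v n ≤ -(m : ℤ)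

lemma unb_step {k : ℕ} {v v' : IWord} (h : IStepAt k v v') (hu : Unb v) : Unb v' := by
  intro m
  obtain ⟨n, hn⟩ := hu (m + 1)
  have hm : (-(((m : ℕ) + 1 : ℕ) : ℤ)) ≤ -(m : ℤ) := by push_cast; omega
  rcases le_or_gt n k with h1 | h1
  · exact ⟨n, by rw [isum_step h n, if_pos h1]; exact hn.trans hm⟩
  · rcases eq_or_lt_of_le (Nat.succ_le_of_lt h1) with h2 | h2
    · refine ⟨k, ?_⟩
      rw [isum_step h k, if_pos le_rfl]
      have hk1 : isum v (k + 1) ≤ -((m : ℤ) + 1) := by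
        rw [show k + 1 = n from h2]; push_cast at hn ⊢; linarith
      have h3 := isum_succ v k
      have h4 := lval_neg_one_le (v k)
      linarith
    · refine ⟨n - 2, ?_⟩
      rw [isum_step h (n - 2)]
      by_cases h3 : n - 2 ≤ k
      · have h4 : n - 2 = k := by omega
        rw [if_pos h3, h4, ← isum_pair h, show k + 2 = n by omega]
        exact hn.trans hm
      · rw [if_neg h3, show n - 2 + 2 = n by omega]
        exact hn.trans hm

/-! ### The strategy: always delete the leftmost adjacent `SP` pair. -/

/-- `v` contains an adjacent factor `SP`. -/
def HasSP (v : IWord) : Prop := ∃ q, v q = S ∧ v (q + 1) = P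

open Classical in
noncomputable def redStep (v : IWord) : IWord :=
  if h : HasSP v then fun i => if i < Nat.find h then v i else v (i + 2) else v

open Classical in
noncomputable def redDepth (v : IWord) : Option ℕ :=
  if h : HasSP v then some (Nat.find h) else none

lemma redStep_eq_of_has {v : IWord} (h : HasSP v) :
    redStep v = fun i => if i < Nat.find h then v i else v (i + 2) := by
  simp only [redStep, dif_pos h]

lemma redDepth_eq_of_has {v : IWord} (h : HasSP v) : redDepth v = some (Nat.find h) := by
  simp only [redDepth, dif_pos h]

lemma redStep_istep {v : IWord} (h : HasSP v) : IStepAt (Nat.find h) v (redStep v) := by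
  refine ⟨Or.inr ⟨(Nat.find_spec h).1, (Nat.find_spec h).2⟩, fun i => ?_⟩
  rw [redStep_eq_of_has h]

lemma redStep_id {v : IWord} (h : ¬ HasSP v) : redStep v = v := by
  simp only [redStep, dif_neg h]

lemma redStep_spec (v : IWord) :
    (redDepth v).elim (redStep v = v) (fun k => IStepAt k v (redStep v)) := by
  by_cases h : HasSP v
  · rw [redDepth_eq_of_has h]
    exact redStep_istep h
  · simp only [redDepth, dif_neg h, Option.elim]
    exact redStep_id h

lemma redStep_pers {v : IWord} {m : ℕ} (hv : ∀ i < m, v i = P) :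
    (∀ i < m, redStep v i = P) ∧ (∀ k, redDepth v = some k → m ≤ k) := by
  by_cases h : HasSP v
  · have hk : m ≤ Nat.find h := by
      by_contra hlt
      push_neg at hlt
      exact absurd ((hv _ hlt).symm.trans (Nat.find_spec h).1) (by decide)
    constructor
    · intro i hi
      rw [redStep_eq_of_has h]
      simp only [if_pos (lt_of_lt_of_le hi hk)]
      exact hv i hi
    · intro k hk'
      rw [redDepth_eq_of_has h, Option.some.injEq] at hk'
      omega
  · exact ⟨fun i hi => by rw [redStep_id h]; exact hv i hi,
      fun k hk => by simp [redDepth, dif_neg h] at hk⟩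

lemma unb_redStep {v : IWord} (hu : Unb v) : Unb (redStep v) := by
  by_cases h : HasSP v
  · exact unb_step (redStep_istep h) hu
  · rwa [redStep_id h]

lemma unb_iter {w : IWord} (hu : Unb w) (n : ℕ) : Unb (redStep^[n] w) := by
  induction n with
  | zero => exact hu
  | succ n ih => rw [Function.iterate_succ_apply']; exact unb_redStep ih

lemma pers_iter {w : IWord} {m N : ℕ} (h : ∀ i < m, (redStep^[N] w) i = P) :
    ∀ n, N ≤ n → ∀ i < m, (redStep^[n] w) i = P := by
  have key : ∀ r, ∀ i < m, (redStep^[N + r] w) i = P := by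
    intro r
    induction r with
    | zero => exact h
    | succ r ih =>
      rw [show N + (r + 1) = (N + r) + 1 by ring, Function.iterate_succ_apply']
      exact (redStep_pers ih).1
  intro n hn
  have := key (n - N)
  rwa [show N + (n - N) = n by omega] at this

lemma isum_hits {v : IWord} (hu : Unb v) (m : ℕ) : ∃ j, isum v j = -(m : ℤ) := by
  obtain ⟨n, hn⟩ := hu m
  have hd : ∃ j, isum v j ≤ -(m : ℤ) := ⟨n, hn⟩
  obtain ⟨j, hj, hjm⟩ : ∃ j, isum v j ≤ -(m : ℤ) ∧ ∀ i < j, ¬ isum v i ≤ -(m : ℤ) :=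
    ⟨Nat.find hd, Nat.find_spec hd, fun i hi => Nat.find_min hd hi⟩
  refine ⟨j, le_antisymm hj ?_⟩
  rcases Nat.eq_zero_or_pos j with h0 | h0
  · subst h0
    simp only [isum, Finset.range_zero, Finset.sum_empty] at hj ⊢
    omega
  · have h1 : ¬ isum v (j - 1) ≤ -(m : ℤ) := hjm (j - 1) (by omega)
    have h2 := isum_succ v (j - 1)
    rw [show j - 1 + 1 = j by omega] at h2
    have h4 := lval_neg_one_le (v (j - 1))
    push_neg at h1
    linarith

lemma neg_le_isum (v : IWord) (n : ℕ) : -(n : ℤ) ≤ isum v n := by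
  induction n with
  | zero => simp [isum]
  | succ n ih =>
    rw [isum_succ]
    have := lval_neg_one_le (v n)
    push_cast
    linarith

open Classical in
/-- The measure used for the progress argument: the first time the running
sum reaches `-(m+1)`. -/
noncomputable def sig (v : IWord) (m : ℕ) : ℕ :=
  if h : ∃ j, isum v j = -(m : ℤ) - 1 then Nat.find h else 0

lemma sig_exists {v : IWord} (hu : Unb v) (m : ℕ) : ∃ j, isum v j = -(m : ℤ) - 1 := by
  obtain ⟨j, hj⟩ := isum_hits hu (m + 1)
  exact ⟨j, by rw [hj]; push_cast; ring⟩

lemma sig_dec {v : IWord} (hu : Unb v) {m : ℕ} (hp : ∀ i < m, v i = P) (hS : v m = S) :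
    sig (redStep v) m < sig v m := by
  -- there is a `P` strictly after position `m`
  have hPafter : ∃ j, m < j ∧ v j = P := by
    by_contra hno
    push_neg at hno
    have hallS : ∀ j, m < j → v j = S := by
      intro j hj
      cases hcase : v j with
      | P => exact absurd hcase (hno j hj)
      | S => rfl
    have hlow : ∀ r : ℕ, isum v (m + 1) ≤ isum v (m + 1 + r) := by
      intro r
      induction r with
      | zero => exact le_rfl
      | succ r ih =>
        have h5 : isum v (m + 1 + (r + 1)) = isum v (m + 1 + r) + lval (v (m + 1 + r)) := by
          rw [show m + 1 + (r + 1) = (m + 1 + r) + 1 by ring, isum_succ]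
        rw [h5, hallS (m + 1 + r) (by omega)]
        simp only [lval]
        linarith
    set c := isum v (m + 1) with hc
    obtain ⟨n, hn⟩ := hu (m + 2 + c.natAbs)
    have h6 : -|c| ≤ c := neg_abs_le c
    have h7 : 0 ≤ |c| := abs_nonneg c
    push_cast [Int.natCast_natAbs] at hn
    have hm0 : (0 : ℤ) ≤ (m : ℤ) := by positivity
    rcases le_or_gt n (m + 1) with h1 | h1
    · have h2 := neg_le_isum v n
      have h3 : (n : ℤ) ≤ (m : ℤ) + 1 := by exact_mod_cast h1
      linarith
    · have h4 := hlow (n - (m + 1))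
      rw [show m + 1 + (n - (m + 1)) = n by omega] at h4
      linarith
  -- hence `v` has an adjacent `SP`
  have hsp : HasSP v := by
    have hfd : ∃ j, m < j ∧ v j = P := hPafter
    obtain ⟨j₀, hj₀, hj₀min⟩ : ∃ j₀, (m < j₀ ∧ v j₀ = P) ∧ ∀ i < j₀, ¬ (m < i ∧ v i = P) :=
      ⟨Nat.find hfd, Nat.find_spec hfd, fun i hi => Nat.find_min hfd hi⟩
    refine ⟨j₀ - 1, ?_, ?_⟩
    · rcases Nat.eq_or_lt_of_le hj₀.1 with he | hlt'
      · rw [show j₀ - 1 = m by omega]; exact hS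
      · have h1 := hj₀min (j₀ - 1) (by omega)
        push_neg at h1
        cases hcase : v (j₀ - 1) with
        | P => exact absurd hcase (h1 (by omega))
        | S => rfl
    · rw [show j₀ - 1 + 1 = j₀ by omega]; exact hj₀.2
  set K := Nat.find hsp with hK
  have hKS : v K = S := (Nat.find_spec hsp).1
  have hKP : v (K + 1) = P := (Nat.find_spec hsp).2
  have hmK : m ≤ K := by
    by_contra hlt
    push_neg at hlt
    exact absurd ((hp _ hlt).symm.trans hKS) (by decide)
  -- all letters in `[m, K]` are `S`
  have hallS : ∀ j, m ≤ j → j ≤ K → v j = S := by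
    by_contra hno
    push_neg at hno
    have hfd : ∃ j, m ≤ j ∧ j ≤ K ∧ v j = P := by
      obtain ⟨j, h1, h2, h3⟩ := hno
      refine ⟨j, h1, h2, ?_⟩
      cases hcase : v j with
      | P => rfl
      | S => exact absurd hcase h3
    obtain ⟨j₁, hj₁, hj₁min⟩ : ∃ j₁, (m ≤ j₁ ∧ j₁ ≤ K ∧ v j₁ = P) ∧
        ∀ i < j₁, ¬ (m ≤ i ∧ i ≤ K ∧ v i = P) :=
      ⟨Nat.find hfd, Nat.find_spec hfd, fun i hi => Nat.find_min hfd hi⟩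
    obtain ⟨hj1, hj2, hj3⟩ := hj₁
    have hj₁m : m < j₁ := by
      rcases Nat.eq_or_lt_of_le hj1 with he | h
      · exfalso; rw [← he] at hj3; exact absurd (hS.symm.trans hj3) (by decide)
      · exact h
    have hprev : v (j₁ - 1) = S := by
      have h1 := hj₁min (j₁ - 1) (by omega)
      push_neg at h1
      cases hcase : v (j₁ - 1) with
      | P => exact absurd hcase (h1 (by omega) (by omega))
      | S => rfl
    have : ¬ (v (j₁ - 1) = S ∧ v (j₁ - 1 + 1) = P) := Nat.find_min hsp (by omega)
    rw [show j₁ - 1 + 1 = j₁ by omega] at this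
    exact this ⟨hprev, hj3⟩
  -- the running sums up to `K + 2` stay `≥ -m`
  have hseg : ∀ r : ℕ, m + r ≤ K + 1 → isum v (m + r) = -(m : ℤ) + r := by
    intro r
    induction r with
    | zero => intro _; rw [Nat.add_zero, isum_P hp]; simp
    | succ r ih =>
      intro hr
      rw [show m + (r + 1) = (m + r) + 1 by ring, isum_succ,
        ih (by omega), hallS (m + r) (by omega) (by omega)]
      simp only [lval]
      push_cast
      ring
  have hlow : ∀ j, j ≤ K + 2 → -(m : ℤ) ≤ isum v j := by
    intro j hj
    rcases le_or_gt j m with h1 | h1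
    · rw [isum_P (fun i hi => hp i (by omega))]
      omega
    · rcases le_or_gt j (K + 1) with h2 | h2
      · rw [show j = m + (j - m) by omega, hseg (j - m) (by omega)]
        omega
      · have hj2 : j = K + 2 := by omega
        rw [hj2, show K + 2 = (K + 1) + 1 by ring, isum_succ,
          show K + 1 = m + (K + 1 - m) by omega, hseg (K + 1 - m) (by omega)]
        have := lval_neg_one_le (v (m + (K + 1 - m)))
        omega
  -- the measure at `v`
  have hex1 := sig_exists hu m
  have hσ : sig v m = Nat.find hex1 := by simp only [sig]; rw [dif_pos hex1]
  have hσval : isum v (Nat.find hex1) = -(m : ℤ) - 1 := Nat.find_spec hex1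
  have hσbig : K + 3 ≤ Nat.find hex1 := by
    by_contra hc
    push_neg at hc
    have := hlow (Nat.find hex1) (by omega)
    omega
  -- the step happens at depth `K`
  have hstep : IStepAt K v (redStep v) := redStep_istep hsp
  have hval : isum (redStep v) (Nat.find hex1 - 2) = -(m : ℤ) - 1 := by
    rw [isum_step hstep, if_neg (by omega : ¬ Nat.find hex1 - 2 ≤ K),
      show Nat.find hex1 - 2 + 2 = Nat.find hex1 by omega]
    exact hσval
  have hex2 : ∃ j, isum (redStep v) j = -(m : ℤ) - 1 := ⟨Nat.find hex1 - 2, hval⟩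
  have hfin : sig (redStep v) m ≤ Nat.find hex1 - 2 := by
    simp only [sig]; rw [dif_pos hex2]
    exact Nat.find_le hval
  omega

lemma prog {w : IWord} (hu : Unb w) (m : ℕ) : ∃ N, ∀ i < m, (redStep^[N] w) i = P := by
  induction m with
  | zero => exact ⟨0, by omega⟩
  | succ m ih =>
    obtain ⟨N, hN⟩ := ih
    by_cases hex : ∃ n, N ≤ n ∧ (redStep^[n] w) m = P
    · obtain ⟨n, hn, hPm⟩ := hex
      refine ⟨n, fun i hi => ?_⟩
      rcases lt_or_eq_of_le (Nat.lt_succ_iff.mp hi) with h1 | h1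
      · exact pers_iter hN n hn i h1
      · rw [h1]; exact hPm
    · exfalso
      push_neg at hex
      have hSm : ∀ n, N ≤ n → (redStep^[n] w) m = S := by
        intro n hn
        cases hcase : (redStep^[n] w) m with
        | P => exact absurd hcase (hex n hn)
        | S => rfl
      have hdec : ∀ r, sig (redStep^[N + r + 1] w) m < sig (redStep^[N + r] w) m := by
        intro r
        have h1 := unb_iter hu (N + r)
        have h2 : ∀ i < m, (redStep^[N + r] w) i = P := pers_iter hN (N + r) (by omega)
        have h3 := hSm (N + r) (by omega)
        have h4 := sig_dec h1 h2 h3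
        rw [Function.iterate_succ_apply']
        exact h4
      have hle : ∀ r, sig (redStep^[N + r] w) m + r ≤ sig (redStep^[N] w) m := by
        intro r
        induction r with
        | zero => simp
        | succ r ih2 =>
          have h5 := hdec r
          rw [show N + (r + 1) = N + r + 1 by ring]
          omega
      have := hle (sig (redStep^[N] w) m + 1)
      omega

lemma ired_of_unb {w : IWord} (hu : Unb w) : IRed w Pomega := by
  refine ⟨fun n => redStep^[n] w, fun n => redDepth (redStep^[n] w), rfl, ?_, ?_, ?_⟩
  · intro n
    show (redDepth (redStep^[n] w)).elim (redStep^[n + 1] w = redStep^[n] w)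
      (fun k => IStepAt k (redStep^[n] w) (redStep^[n + 1] w))
    rw [Function.iterate_succ_apply']
    exact redStep_spec _
  · intro m
    obtain ⟨N, hN⟩ := prog hu m
    exact ⟨N, fun n hn k hk => (redStep_pers (pers_iter hN n hn)).2 k hk⟩
  · intro m
    obtain ⟨N, hN⟩ := prog hu (m + 1)
    exact ⟨N, fun n hn i him => pers_iter hN n hn i (by omega)⟩

lemma back {t : ℕ → IWord} {d : ℕ → Option ℕ}
    (hstep : ∀ n, (d n).elim (t (n + 1) = t n) (fun k => IStepAt k (t n) (t (n + 1)))) :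
    ∀ n m, ∃ m', m ≤ m' ∧ isum (t 0) m' = isum (t n) m := by
  intro n
  induction n with
  | zero => exact fun m => ⟨m, le_rfl, rfl⟩
  | succ n ih =>
    intro m
    have h := hstep n
    cases hd : d n with
    | none =>
      rw [hd] at h
      replace h : t (n + 1) = t n := h
      rw [h]
      exact ih m
    | some k =>
      rw [hd] at h
      replace h : IStepAt k (t n) (t (n + 1)) := h
      rw [isum_step h m]
      by_cases hm : m ≤ k
      · rw [if_pos hm]; exact ih m
      · rw [if_neg hm]
        obtain ⟨m', hm1, hm2⟩ := ih (m + 2)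
        exact ⟨m', by omega, hm2⟩

lemma unb_of_ired {w : IWord} (h : IRed w Pomega) : Unb w := by
  obtain ⟨t, d, ht0, hstep, _, hconv⟩ := h
  intro m
  obtain ⟨N, hN⟩ := hconv m
  have hP : ∀ i < m + 1, t N i = P := fun i hi => hN N le_rfl i (by omega)
  have h1 : isum (t N) (m + 1) = -((m : ℤ) + 1) := by
    rw [isum_P hP]; push_cast; ring
  obtain ⟨m', _, hm2⟩ := back hstep N (m + 1)
  rw [ht0] at hm2
  refine ⟨m', ?_⟩
  rw [hm2, h1]
  omega

lemma pnorm_top_iff_unb (w : IWord) : Pnorm w = ⊤ ↔ Unb w := by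
  rw [Pnorm, iSup_eq_top]
  constructor
  · intro h m
    obtain ⟨n, hn⟩ := h ((m : ℝ) : EReal) (EReal.coe_lt_top _)
    have h1 : (m : ℝ) < -((isum w n : ℝ)) := by exact_mod_cast hn
    have h2 : (m : ℤ) < -(isum w n) := by exact_mod_cast h1
    exact ⟨n, by omega⟩
  · intro h b hb
    obtain ⟨x, hx, -⟩ := EReal.exists_between_coe_real hb
    obtain ⟨n, hn⟩ := h (⌈x⌉₊)
    refine ⟨n, lt_of_lt_of_le hx ?_⟩
    rw [EReal.coe_le_coe_iff]
    have h9 : ((⌈x⌉₊ : ℕ) : ℝ) ≤ -((isum w n : ℝ)) := by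
      have h8 : ((⌈x⌉₊ : ℕ) : ℤ) ≤ -(isum w n) := by omega
      exact_mod_cast h8
    calc x ≤ (⌈x⌉₊ : ℝ) := Nat.le_ceil x
      _ ≤ _ := h9

/-- For every infinite word `w` over `{P, S}`:
`w ↠∞ P^ω` if and only if `‖w‖_P = ∞`. -/
theorem ired_Pomega_iff_Pnorm_top (w : IWord) :
    IRed w Pomega ↔ Pnorm w = ⊤ := by
  rw [pnorm_top_iff_unb]
  exact ⟨unb_of_ired, ired_of_unb⟩

end PS
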